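/- arXiv:1604.04073 — 4 statements merged into one kernel-verified Lean document; each statement's English description precedes it below -/
import Mathlib

section
/- Let ε, μ₂ > 0, let γ = 1/√(1+ε), and let μ₁ ∈ ℝ with μ₁ ≠ μ₂√(1+ε). Define a₃ = 2((1+ε)γμ₂ − μ₁), a₂ = (1+ε)γ² − 4γμ₁μ₂ + 1, a₁ = 2γ(μ₂ − γμ₁), a₀ = γ², and e₃ = a₁(a₃a₂ − a₁)/a₃ − a₀a₃. Then e₃ = 0 if and only if μ₁ = ε/(4μ₂√(1+ε)). -/
theorem stmt_3 (ε μ₁ μ₂ : ℝ) (hε : 0 < ε) (hμ₂ : 0 < μ₂)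
    (γ : ℝ) (hγ : γ = 1/Real.sqrt (1+ε))
    (hμ₁ : μ₁ ≠ μ₂ * Real.sqrt (1+ε))
    (a₃ a₂ a₁ a₀ e₃ : ℝ)
    (ha₃ : a₃ = 2*((1+ε)*γ*μ₂ - μ₁))
    (ha₂ : a₂ = (1+ε)*γ^2 - 4*γ*μ₁*μ₂ + 1)
    (ha₁ : a₁ = 2*γ*(μ₂ - γ*μ₁))
    (ha₀ : a₀ = γ^2)
    (he₃ : e₃ = a₁*(a₃*a₂ - a₁)/a₃ - a₀*a₃) :
    e₃ = 0 ↔ μ₁ = ε/(4*μ₂*Real.sqrt (1+ε)) := by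
  set s := Real.sqrt (1+ε) with hs
  have hs0 : 0 < s := Real.sqrt_pos.mpr (by linarith)
  have hs2 : s^2 = 1+ε := Real.sq_sqrt (by linarith)
  have hd : s*μ₂ - μ₁ ≠ 0 := by
    intro h; apply hμ₁; linarith [h]
  have ha3 : a₃ = 2*(s*μ₂ - μ₁) := by
    rw [ha₃, hγ, ← hs2]; field_simp
  have ha3ne : a₃ ≠ 0 := by
    rw [ha3]; intro h
    exact hd (by linarith)
  have h2d : 2*(s*μ₂-μ₁) ≠ 0 := mul_ne_zero two_ne_zero hd
  have hεs : ε = s^2 - 1 := by linarith [hs2]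
  have key : e₃ = 2*(s*μ₂-μ₁)*(ε-4*μ₁*μ₂*s)/s^4 := by
    rw [he₃, ha₁, ha₂, ha₀, ha3, hγ, hεs]
    field_simp
    ring
  rw [key]
  constructor
  · intro h
    have h2 : 2*(s*μ₂-μ₁)*(ε-4*μ₁*μ₂*s) = 0 :=
      (div_eq_zero_iff.mp h).resolve_right (by positivity)
    have h3 : ε-4*μ₁*μ₂*s = 0 := by
      rcases mul_eq_zero.mp h2 with h4 | h4
      · exact absurd (by linarith : s*μ₂-μ₁ = 0) hd
      · exact h4
    field_simp
    linarith
  · intro h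
    have h4 : 4*μ₂*s ≠ 0 := by positivity
    have : μ₁ * (4*μ₂*s) = ε := by
      rw [h]; field_simp
    have : ε-4*μ₁*μ₂*s = 0 := by linarith [this]
    rw [this]; ring
end

section
/- Let ε > 0 and set γ = 1/√(1+ε) and μ₂ = (1/2)√(ε/(1+ε)). Then for any μ₁ ∈ ℝ, every complex root of the quartic z⁴ + 2((1+ε)γμ₂ − μ₁)z³ + ((1+ε)γ² − 4γμ₁μ₂ + 1)z² + 2γ(μ₂ − γμ₁)z + γ² has strictly negative real part if and only if μ₁ < √ε/2. -/
/-!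
With `t = √ε - 2μ₁`, `b = 1/(1+ε)` and `c = √ε/(1+ε)` the optimally tuned quartic becomes
`z⁴ + t z³ + (1 + b + c t) z² + b t z + b = (z² + t z + 1)(z² + b) + c t z²`.
If all roots lie in the open left half plane, their sum `-t` has negative real part, so `t > 0`.
Conversely, for `t > 0` a root `z` with `Re z ≥ 0` would give
`(z + t + z⁻¹)(z + b z⁻¹) = -c t < 0`, a product of a number with positive real part and one with
nonnegative real part, which can never be a negative real.
-/

open Polynomial

lemma Polynomial.re_nextCoeff_pos_of_forall_isRoot {p : ℂ[X]} (hp : p.Monic)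
    (hdeg : 0 < p.natDegree) (h : ∀ z, p.IsRoot z → z.re < 0) : 0 < p.nextCoeff.re := by
  have hsplits : p.Splits := IsAlgClosed.splits p
  have hne : p.roots ≠ 0 := by
    rw [← Multiset.card_pos, splits_iff_card_roots.mp hsplits]
    exact hdeg
  have hsum : (p.roots.map Complex.re).sum < 0 := by
    simpa using Multiset.sum_lt_sum_of_nonempty (g := fun _ => (0 : ℝ)) hne
      fun z hz => h z (isRoot_of_mem_roots hz)
  have hre : p.roots.sum.re = (p.roots.map Complex.re).sum :=
    map_multiset_sum Complex.reAddGroupHom p.roots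
  rw [hsplits.nextCoeff_eq_neg_sum_roots_of_monic hp, Complex.neg_re, hre]
  linarith

lemma Complex.mul_ne_neg_ofReal {a b : ℂ} (ha : 0 < a.re) (hb : 0 ≤ b.re) {k : ℝ} (hk : 0 < k) :
    a * b ≠ -k := by
  intro hab
  have ha0 : a ≠ 0 := by rintro rfl; simp at ha
  have hb' : b = -k / a := eq_div_of_mul_eq ha0 (by rw [mul_comm, hab])
  have : 0 < k * a.re / normSq a := by
    have := normSq_pos.mpr ha0
    positivity
  rw [hb', div_re] at hb
  simp only [neg_re, ofReal_re, neg_im, ofReal_im, neg_zero, zero_mul, zero_div, add_zero, neg_div,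
    neg_mul] at hb
  linarith

lemma quartic_factor {z : ℂ} (hz : z ≠ 0) (t b c : ℂ) :
    z^4 + t*z^3 + (1 + b + c*t)*z^2 + b*t*z + b = ((z + t + z⁻¹) * (z + b*z⁻¹) + c*t) * z^2 := by
  field_simp
  ring

lemma Complex.inv_re_nonneg {z : ℂ} (hz : 0 ≤ z.re) : 0 ≤ z⁻¹.re := by
  rw [Complex.inv_re]
  exact div_nonneg hz (Complex.normSq_nonneg z)

lemma quartic_stable_iff {t b c : ℝ} (hb : 0 < b) (hc : 0 < c) :
    (∀ z : ℂ, z^4 + t*z^3 + (1 + b + c*t)*z^2 + b*t*z + b = 0 → z.re < 0) ↔ 0 < t := by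
  constructor
  · intro h
    set Q : ℂ[X] := X^4 + C (t : ℂ) * X^3 + C (1 + b + c*t : ℂ) * X^2 + C (b*t : ℂ) * X + C (b : ℂ)
    have hQdeg : Q.natDegree = 4 := by unfold Q; compute_degree!
    have hQmonic : Q.Monic := by unfold Q; monicity!
    have hnext : Q.nextCoeff = t := by
      rw [nextCoeff_of_natDegree_pos (by rw [hQdeg]; norm_num), hQdeg]
      simp only [Q, coeff_add, coeff_C_mul, coeff_X_pow, coeff_C, coeff_X]
      norm_num
    have := Q.re_nextCoeff_pos_of_forall_isRoot hQmonic (by rw [hQdeg]; norm_num)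
      fun z hz => h z (by simpa [Q] using hz)
    simpa [hnext] using this
  · intro ht z hz
    by_contra! hre
    have hz0 : z ≠ 0 := by
      rintro rfl
      simp [hb.ne'] at hz
    rw [quartic_factor hz0, mul_eq_zero, or_iff_left (pow_ne_zero 2 hz0),
      add_eq_zero_iff_eq_neg] at hz
    refine Complex.mul_ne_neg_ofReal ?_ ?_ (mul_pos hc ht) (by push_cast; exact hz)
    · simp only [Complex.add_re, Complex.ofReal_re]
      linarith [Complex.inv_re_nonneg hre]
    · simp only [Complex.add_re, Complex.re_ofReal_mul]
      linarith [mul_nonneg hb.le (Complex.inv_re_nonneg hre)]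

theorem stmt_5 (ε : ℝ) (hε : 0 < ε)
    (γ μ₂ : ℝ) (hγ : γ = 1/Real.sqrt (1+ε)) (hμ₂ : μ₂ = (1/2) * Real.sqrt (ε/(1+ε)))
    (μ₁ : ℝ) :
    (∀ z : ℂ, z^4 + ((2*((1+ε)*γ*μ₂ - μ₁) : ℝ) : ℂ)*z^3
        + (((1+ε)*γ^2 - 4*γ*μ₁*μ₂ + 1 : ℝ) : ℂ)*z^2
        + ((2*γ*(μ₂ - γ*μ₁) : ℝ) : ℂ)*z + ((γ^2 : ℝ) : ℂ) = 0 → z.re < 0) ↔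
      μ₁ < Real.sqrt ε / 2 := by
  have h1ε : 0 < 1 + ε := by linarith
  have hs2 : √(1 + ε) ^ 2 = 1 + ε := Real.sq_sqrt h1ε.le
  have he2 : √ε ^ 2 = ε := Real.sq_sqrt hε.le
  rw [Real.sqrt_div' _ h1ε.le] at hμ₂
  have hcoeff3 : 2*((1+ε)*γ*μ₂ - μ₁) = √ε - 2*μ₁ := by
    subst hγ hμ₂; field_simp; rw [hs2]; ring
  have hcoeff2 : (1+ε)*γ^2 - 4*γ*μ₁*μ₂ + 1 = 1 + 1/(1+ε) + √ε/(1+ε)*(√ε - 2*μ₁) := by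
    subst hγ hμ₂; field_simp; rw [hs2]; linear_combination (-2 * (1 + ε)) * he2
  have hcoeff1 : 2*γ*(μ₂ - γ*μ₁) = 1/(1+ε)*(√ε - 2*μ₁) := by
    subst hγ hμ₂; field_simp; rw [hs2]
  have hcoeff0 : γ^2 = 1/(1+ε) := by
    subst hγ; field_simp; rw [hs2]
  rw [hcoeff3, hcoeff2, hcoeff1, hcoeff0,
    show μ₁ < √ε / 2 ↔ 0 < √ε - 2 * μ₁ by constructor <;> intro <;> linarith,
    ← quartic_stable_iff (b := 1 / (1 + ε)) (c := √ε / (1 + ε)) (by positivity) (by positivity)]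
  push_cast
  rfl
end

section
/- Let ε, μ₂ > 0, let γ = 1/√(1+ε) and μ₁ ∈ ℝ. If every complex root of the quartic z⁴ + 2((1+ε)γμ₂ − μ₁)z³ + ((1+ε)γ² − 4γμ₁μ₂ + 1)z² + 2γ(μ₂ − γμ₁)z + γ² has strictly negative real part, then μ₁ < μ₂√(1+ε) and μ₁ < ε/(4μ₂√(1+ε)); since the product of these two bounds is ε/4, it follows that μ₁ < √ε/2. -/
open Complex Polynomial


lemma quartic_root (a b c d : ℂ) : ∃ z : ℂ, z^4 + a*z^3 + b*z^2 + c*z + d = 0 := by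
  obtain ⟨z, hz⟩ := IsAlgClosed.exists_root (k := ℂ)
    (X^4 + C a * X^3 + C b * X^2 + C c * X + C d)
    (by have : (X^4 + C a * X^3 + C b * X^2 + C c * X + C d).degree = 4 := by compute_degree!
        rw [this]; norm_num)
  exact ⟨z, by simpa [Polynomial.IsRoot] using hz⟩

lemma cubic_root (a b c : ℂ) : ∃ z : ℂ, z^3 + a*z^2 + b*z + c = 0 := by
  obtain ⟨z, hz⟩ := IsAlgClosed.exists_root (k := ℂ)
    (X^3 + C a * X^2 + C b * X + C c)
    (by have : (X^3 + C a * X^2 + C b * X + C c).degree = 3 := by compute_degree!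
        rw [this]; norm_num)
  exact ⟨z, by simpa [Polynomial.IsRoot] using hz⟩

lemma conj_root2' (u v : ℝ) (z : ℂ) (h : z^2 + u*z + v = 0) :
    (starRingEnd ℂ z)^2 + u*(starRingEnd ℂ z) + v = 0 := by
  have := congrArg (starRingEnd ℂ) h
  simpa [map_add, map_mul, map_pow, Complex.conj_ofReal] using this

lemma conj_root3 (a b c : ℝ) (z : ℂ) (h : z^3 + a*z^2 + b*z + c = 0) :
    (starRingEnd ℂ z)^3 + a*(starRingEnd ℂ z)^2 + b*(starRingEnd ℂ z) + c = 0 := by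
  have := congrArg (starRingEnd ℂ) h
  simpa [map_add, map_mul, map_pow, Complex.conj_ofReal] using this

lemma conj_root4 (a b c d : ℝ) (z : ℂ) (h : z^4 + a*z^3 + b*z^2 + c*z + d = 0) :
    (starRingEnd ℂ z)^4 + a*(starRingEnd ℂ z)^3 + b*(starRingEnd ℂ z)^2
      + c*(starRingEnd ℂ z) + d = 0 := by
  have := congrArg (starRingEnd ℂ) h
  simpa [map_add, map_mul, map_pow, Complex.conj_ofReal] using this

lemma self_root (t : ℂ) :
    t^2 + ((-2*t.re : ℝ):ℂ)*t + ((Complex.normSq t : ℝ):ℂ) = 0 := by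
  have h1 : ((-2*t.re : ℝ):ℂ) = -(t + starRingEnd ℂ t) := by
    rw [Complex.add_conj]; push_cast; ring
  have h2 : ((Complex.normSq t : ℝ):ℂ) = t * starRingEnd ℂ t := (Complex.mul_conj t).symm
  rw [h1, h2]; ring

lemma lin_zero {l m t : ℂ} (him : t.im ≠ 0) (h1 : l*t + m = 0)
    (h2 : l*(starRingEnd ℂ t) + m = 0) : l = 0 ∧ m = 0 := by
  have h3 : l * (t - starRingEnd ℂ t) = 0 := by linear_combination h1 - h2
  have h4 : t - starRingEnd ℂ t ≠ 0 := by
    intro h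
    exact him (Complex.conj_eq_iff_im.mp (sub_eq_zero.mp h).symm)
  have hl : l = 0 := by rcases mul_eq_zero.mp h3 with h|h; exact h; exact absurd h h4
  exact ⟨hl, by linear_combination h1 - t*hl⟩

lemma factor (A B Cc D : ℝ) :
    ∃ u v p q : ℝ, ∀ z : ℂ,
      z^4 + (A:ℂ)*z^3 + (B:ℂ)*z^2 + (Cc:ℂ)*z + (D:ℂ)
        = (z^2 + (u:ℂ)*z + (v:ℂ)) * (z^2 + (p:ℂ)*z + (q:ℂ)) := by
  obtain ⟨r, hr⟩ := quartic_root (A:ℂ) (B:ℂ) (Cc:ℂ) (D:ℂ)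
  by_cases him : r.im = 0
  · -- r real
    have hrs : r = ((r.re : ℝ) : ℂ) := Complex.ext rfl (by simp [him])
    obtain ⟨a, haa⟩ : ∃ a : ℝ, r = (a:ℂ) := ⟨r.re, hrs⟩
    rw [haa] at hr
    obtain ⟨r₂, hr₂⟩ := cubic_root ((A + a : ℝ):ℂ) ((B + A*a + a^2 : ℝ):ℂ)
      ((Cc + B*a + A*a^2 + a^3 : ℝ):ℂ)
    push_cast at hr₂
    by_cases him2 : r₂.im = 0
    · -- two real roots a, b
      obtain ⟨b, hbb⟩ : ∃ b : ℝ, r₂ = (b:ℂ) := ⟨r₂.re, Complex.ext rfl (by simp [him2])⟩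
      rw [hbb] at hr₂
      refine ⟨-(a+b), a*b, (A + a) + b, (B + A*a + a^2) + (A + a)*b + b^2, fun z => ?_⟩
      push_cast
      linear_combination hr + (z - (a:ℂ)) * hr₂
    · -- conj pair from cubic
      obtain ⟨u, hu⟩ : ∃ u : ℝ, u = -2*r₂.re := ⟨_, rfl⟩
      obtain ⟨v, hv⟩ : ∃ v : ℝ, v = Complex.normSq r₂ := ⟨_, rfl⟩
      have hq2 : r₂^2 + (u:ℂ)*r₂ + (v:ℂ) = 0 := by rw [hu, hv]; exact self_root r₂
      have hq2c := conj_root2' u v r₂ hq2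
      have hr₂c := conj_root3 (A+a) (B + A*a + a^2) (Cc + B*a + A*a^2 + a^3) r₂ (by push_cast; exact hr₂)
      push_cast at hr₂c
      obtain ⟨w, hwc0⟩ : ∃ w : ℝ, (w:ℂ) = (A:ℂ) + (a:ℂ) - (u:ℂ) :=
        ⟨A + a - u, by push_cast; ring⟩
      obtain ⟨lam, hlamc0⟩ : ∃ lam : ℝ,
          (lam:ℂ) = (B:ℂ) + (A:ℂ)*(a:ℂ) + (a:ℂ)^2 - (v:ℂ) - (u:ℂ)*(w:ℂ) :=
        ⟨B + A*a + a^2 - v - u*w, by push_cast; ring⟩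
      obtain ⟨mu, hmuc0⟩ : ∃ mu : ℝ,
          (mu:ℂ) = (Cc:ℂ) + (B:ℂ)*(a:ℂ) + (A:ℂ)*(a:ℂ)^2 + (a:ℂ)^3 - (v:ℂ)*(w:ℂ) :=
        ⟨Cc + B*a + A*a^2 + a^3 - v*w, by push_cast; ring⟩
      have e1 : (lam:ℂ)*r₂ + (mu:ℂ) = 0 := by
        linear_combination r₂*hlamc0 + hmuc0 + hr₂ - (r₂ + (w:ℂ))*hq2 + r₂^2*hwc0
      have e2 : (lam:ℂ)*(starRingEnd ℂ r₂) + (mu:ℂ) = 0 := by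
        linear_combination (starRingEnd ℂ r₂)*hlamc0 + hmuc0 + hr₂c
          - ((starRingEnd ℂ r₂) + (w:ℂ))*hq2c + (starRingEnd ℂ r₂)^2*hwc0
      obtain ⟨hl0, hm0⟩ := lin_zero him2 e1 e2
      have hlamC : (B:ℂ) + (A:ℂ)*(a:ℂ) + (a:ℂ)^2 - (v:ℂ) - (u:ℂ)*(w:ℂ) = 0 :=
        hlamc0.symm.trans hl0
      have hmuC : (Cc:ℂ) + (B:ℂ)*(a:ℂ) + (A:ℂ)*(a:ℂ)^2 + (a:ℂ)^3 - (v:ℂ)*(w:ℂ) = 0 :=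
        hmuc0.symm.trans hm0
      refine ⟨u, v, w - a, -(a*w), fun z => ?_⟩
      push_cast
      linear_combination hr + (z - (a:ℂ)) * (-(z^2)*hwc0 + z*hlamC + hmuC)
  · -- r nonreal
    obtain ⟨u, hu⟩ : ∃ u : ℝ, u = -2*r.re := ⟨_, rfl⟩
    obtain ⟨v, hv⟩ : ∃ v : ℝ, v = Complex.normSq r := ⟨_, rfl⟩
    have hq2 : r^2 + (u:ℂ)*r + (v:ℂ) = 0 := by rw [hu, hv]; exact self_root r
    have hq2c := conj_root2' u v r hq2
    have hrc := conj_root4 A B Cc D r hr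
    obtain ⟨p, hpc0⟩ : ∃ p : ℝ, (p:ℂ) = (A:ℂ) - (u:ℂ) := ⟨A - u, by push_cast; ring⟩
    obtain ⟨q, hqc0⟩ : ∃ q : ℝ, (q:ℂ) = (B:ℂ) - (v:ℂ) - (u:ℂ)*(p:ℂ) :=
      ⟨B - v - u*p, by push_cast; ring⟩
    obtain ⟨lam, hlamc0⟩ : ∃ lam : ℝ, (lam:ℂ) = (Cc:ℂ) - ((u:ℂ)*(q:ℂ) + (v:ℂ)*(p:ℂ)) :=
      ⟨Cc - (u*q + v*p), by push_cast; ring⟩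
    obtain ⟨mu, hmuc0⟩ : ∃ mu : ℝ, (mu:ℂ) = (D:ℂ) - (v:ℂ)*(q:ℂ) :=
      ⟨D - v*q, by push_cast; ring⟩
    have e1 : (lam:ℂ)*r + (mu:ℂ) = 0 := by
      linear_combination r*hlamc0 + hmuc0 + hr - (r^2 + (p:ℂ)*r + (q:ℂ))*hq2
        + r^3*hpc0 + r^2*hqc0
    have e2 : (lam:ℂ)*(starRingEnd ℂ r) + (mu:ℂ) = 0 := by
      linear_combination (starRingEnd ℂ r)*hlamc0 + hmuc0 + hrc
        - ((starRingEnd ℂ r)^2 + (p:ℂ)*(starRingEnd ℂ r) + (q:ℂ))*hq2c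
        + (starRingEnd ℂ r)^3*hpc0 + (starRingEnd ℂ r)^2*hqc0
    obtain ⟨hl0, hm0⟩ := lin_zero him e1 e2
    have hlamC : (Cc:ℂ) - ((u:ℂ)*(q:ℂ) + (v:ℂ)*(p:ℂ)) = 0 := hlamc0.symm.trans hl0
    have hmuC : (D:ℂ) - (v:ℂ)*(q:ℂ) = 0 := hmuc0.symm.trans hm0
    refine ⟨u, v, p, q, fun z => ?_⟩
    linear_combination -(z^3)*hpc0 - z^2*hqc0 + z*hlamC + hmuC


lemma quad_root (a b : ℂ) : ∃ z : ℂ, z^2 + a*z + b = 0 := by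
  obtain ⟨z, hz⟩ := IsAlgClosed.exists_root (k := ℂ)
    (X^2 + C a * X + C b)
    (by have : (X^2 + C a * X + C b).degree = 2 := by compute_degree!
        rw [this]; norm_num)
  exact ⟨z, by simpa [Polynomial.IsRoot] using hz⟩

lemma quad_pair (u v : ℝ) {t : ℂ} (ht : t^2 + u*t + v = 0) (him : t.im ≠ 0) :
    starRingEnd ℂ t = -(u:ℂ) - t := by
  have hc := conj_root2' u v t ht
  have hfac : ∀ z : ℂ, z^2 + u*z + v = (z - t) * (z - (-(u:ℂ) - t)) := by
    intro z; linear_combination ht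
  have h2 := hfac (starRingEnd ℂ t)
  rw [hc] at h2
  have h3 : (starRingEnd ℂ t - t) * (starRingEnd ℂ t - (-(u:ℂ) - t)) = 0 := h2.symm
  rcases mul_eq_zero.mp h3 with h4 | h4
  · exact absurd (Complex.conj_eq_iff_im.mp (sub_eq_zero.mp h4)) him
  · exact sub_eq_zero.mp h4

lemma quad_info (u v : ℝ) (h : ∀ z : ℂ, z^2 + u*z + v = 0 → z.re < 0) :
    0 < u ∧ 0 < v := by
  obtain ⟨t, ht⟩ := quad_root u v
  have hw : (-(u:ℂ) - t)^2 + u*(-(u:ℂ) - t) + v = 0 := by linear_combination ht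
  have htre := h t ht
  have hwre := h _ hw
  have hwre' : (-(u:ℂ) - t).re = -u - t.re := by simp
  rw [hwre'] at hwre
  constructor
  · linarith
  · by_cases him : t.im = 0
    · have hvc : (v:ℂ) = t * (-(u:ℂ) - t) := by linear_combination ht
      have : v = t.re * (-u - t.re) - t.im * (-t.im) := by
        have := congrArg Complex.re hvc
        simpa [Complex.mul_re] using this
      rw [him] at this
      nlinarith
    · have hct := quad_pair u v ht him
      have hvc : (v:ℂ) = t * (-(u:ℂ) - t) := by linear_combination ht
      rw [← hct] at hvc
      have : (v:ℂ) = (Complex.normSq t : ℝ) := by rw [hvc]; exact Complex.mul_conj t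
      have hv : v = Complex.normSq t := by exact_mod_cast this
      rw [hv]
      have : t ≠ 0 := fun h0 => by simp [h0] at htre
      exact Complex.normSq_pos.mpr this


lemma E_pos (u v p q : ℝ) (hu : 0 < u) (hv : 0 < v)
    (h1 : ∀ z : ℂ, z^2 + u*z + v = 0 → z.re < 0)
    (h2 : ∀ z : ℂ, z^2 + p*z + q = 0 → z.re < 0) :
    0 < q^2 + u*p*q + v*p^2 - 2*v*q + u^2*q + u*v*p + v^2 := by
  obtain ⟨t, ht⟩ := quad_root p q
  have htre := h2 t ht
  have hw : (-(p:ℂ) - t)^2 + p*(-(p:ℂ) - t) + q = 0 := by linear_combination ht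
  have hwre : (-(p:ℂ) - t).re < 0 := h2 _ hw
  have hwre' : (-(p:ℂ) - t).re = -p - t.re := by simp
  have hE : ((q^2 + u*p*q + v*p^2 - 2*v*q + u^2*q + u*v*p + v^2 : ℝ) : ℂ)
      = (t^2 - u*t + v) * ((-(p:ℂ) - t)^2 - u*(-(p:ℂ) - t) + v) := by
    push_cast
    linear_combination ((q:ℂ) + p*u - 2*v + u^2 - t^2 - p*t) * ht
  by_cases him : t.im = 0
  · have hts : t = ((t.re : ℝ) : ℂ) := Complex.ext rfl (by simp [him])
    set a := t.re with ha
    have hX : (t^2 - u*t + v) = ((a^2 - u*a + v : ℝ) : ℂ) := by rw [hts]; push_cast; ring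
    have hY : ((-(p:ℂ) - t)^2 - u*(-(p:ℂ) - t) + v) = (((-p-a)^2 - u*(-p-a) + v : ℝ) : ℂ) := by
      rw [hts]; push_cast; ring
    rw [hX, hY, ← Complex.ofReal_mul] at hE
    have hEr : q^2 + u*p*q + v*p^2 - 2*v*q + u^2*q + u*v*p + v^2
        = (a^2 - u*a + v) * ((-p-a)^2 - u*(-p-a) + v) := Complex.ofReal_inj.mp hE
    rw [hEr]
    have ha1 : a < 0 := htre
    have ha2 : -p - a < 0 := by rw [hwre'] at hwre; linarith
    have : 0 < a^2 - u*a + v := by nlinarith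
    have : 0 < (-p-a)^2 - u*(-p-a) + v := by nlinarith
    positivity
  · have hct := quad_pair p q ht him
    have hNw : ((-(p:ℂ) - t)^2 - u*(-(p:ℂ) - t) + v) = starRingEnd ℂ (t^2 - u*t + v) := by
      rw [← hct]; simp [map_sub, map_add, map_mul, map_pow, Complex.conj_ofReal]
    rw [hNw, Complex.mul_conj] at hE
    have hEr : q^2 + u*p*q + v*p^2 - 2*v*q + u^2*q + u*v*p + v^2
        = Complex.normSq (t^2 - u*t + v) := Complex.ofReal_inj.mp hE
    rw [hEr]
    refine Complex.normSq_pos.mpr fun h0 => ?_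
    have : (-t)^2 + u*(-t) + v = 0 := by linear_combination h0
    have := h1 (-t) this
    simp at this
    linarith


lemma coeffs_eq {A B Cc D u v p q : ℂ}
    (h : ∀ z : ℂ, z^4 + A*z^3 + B*z^2 + Cc*z + D = (z^2 + u*z + v) * (z^2 + p*z + q)) :
    A = u + p ∧ B = v + q + u*p ∧ Cc = u*q + v*p ∧ D = v*q := by
  have h0 := h 0
  have h1 := h 1
  have h2 := h (-1)
  have h3 := h 2
  refine ⟨?_, ?_, ?_, ?_⟩
  · linear_combination (h3 - 3*h1 - h2 + 3*h0)/6
  · linear_combination (h1 + h2 - 2*h0)/2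
  · linear_combination (6*h1 - 2*h2 - h3 - 3*h0)/6
  · linear_combination h0


theorem stmt_8 (ε μ₂ : ℝ) (hε : 0 < ε) (hμ₂ : 0 < μ₂)
    (γ : ℝ) (hγ : γ = 1/Real.sqrt (1+ε)) (μ₁ : ℝ)
    (hstab : ∀ z : ℂ, z^4 + ((2*((1+ε)*γ*μ₂ - μ₁) : ℝ) : ℂ)*z^3
        + (((1+ε)*γ^2 - 4*γ*μ₁*μ₂ + 1 : ℝ) : ℂ)*z^2
        + ((2*γ*(μ₂ - γ*μ₁) : ℝ) : ℂ)*z + ((γ^2 : ℝ) : ℂ) = 0 → z.re < 0) :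
    μ₁ < μ₂ * Real.sqrt (1+ε) ∧ μ₁ < ε/(4*μ₂*Real.sqrt (1+ε)) ∧
      (μ₂ * Real.sqrt (1+ε)) * (ε/(4*μ₂*Real.sqrt (1+ε))) = ε/4 ∧
      μ₁ < Real.sqrt ε / 2 := by
  set s : ℝ := Real.sqrt (1+ε) with hs_def
  have hs2 : s^2 = 1+ε := Real.sq_sqrt (by linarith)
  have hs0 : 0 < s := Real.sqrt_pos.mpr (by linarith)
  have hγ' : γ = 1/s := hγ
  have hε' : ε = s^2 - 1 := by linarith
  set A : ℝ := 2*((1+ε)*γ*μ₂ - μ₁) with hA_def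
  set B : ℝ := (1+ε)*γ^2 - 4*γ*μ₁*μ₂ + 1 with hB_def
  set Cc : ℝ := 2*γ*(μ₂ - γ*μ₁) with hC_def
  set D : ℝ := γ^2 with hD_def
  obtain ⟨u, v, p, q, hfac⟩ := factor A B Cc D
  have h1 : ∀ z : ℂ, z^2 + (u:ℝ)*z + (v:ℝ) = 0 → z.re < 0 := by
    intro z hz
    exact hstab z (by rw [hfac z, hz, zero_mul])
  have h2 : ∀ z : ℂ, z^2 + (p:ℝ)*z + (q:ℝ) = 0 → z.re < 0 := by
    intro z hz
    exact hstab z (by rw [hfac z, hz, mul_zero])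
  obtain ⟨hu, hv⟩ := quad_info u v h1
  obtain ⟨hp, hq⟩ := quad_info p q h2
  obtain ⟨hAc, hBc, hCc, hDc⟩ := coeffs_eq hfac
  have hA : A = u + p := by exact_mod_cast hAc
  have hB : B = v + q + u*p := by exact_mod_cast hBc
  have hC : Cc = u*q + v*p := by exact_mod_cast hCc
  have hD : D = v*q := by exact_mod_cast hDc
  have hE := E_pos u v p q hu hv h1 h2
  have hDelta : 0 < A*B*Cc - Cc^2 - A^2*D := by
    rw [hA, hB, hC, hD]
    have : (u+p)*(v+q+u*p)*(u*q+v*p) - (u*q+v*p)^2 - (u+p)^2*(v*q)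
        = u*p*(q^2 + u*p*q + v*p^2 - 2*v*q + u^2*q + u*v*p + v^2) := by ring
    rw [this]
    positivity
  have hA2 : A = 2*(s*μ₂ - μ₁) := by
    rw [hA_def, hγ', hε']
    field_simp
    ring
  have hAPos : 0 < A := by rw [hA]; positivity
  have hb1 : μ₁ < μ₂ * s := by rw [hA2] at hAPos; nlinarith
  have hkey : A^2*(ε - 4*μ₁*μ₂*s) = s^4*(A*B*Cc - Cc^2 - A^2*D) := by
    rw [hA_def, hB_def, hC_def, hD_def, hγ', hε']
    field_simp
    ring
  have hX : 0 < ε - 4*μ₁*μ₂*s := by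
    have h5 : 0 < A^2*(ε - 4*μ₁*μ₂*s) := by
      rw [hkey]; exact mul_pos (pow_pos hs0 4) hDelta
    nlinarith [sq_nonneg A]
  have hY0 : 0 < ε/(4*μ₂*s) := by positivity
  have hb2 : μ₁ < ε/(4*μ₂*s) := by
    rw [lt_div_iff₀ (by positivity)]
    have hr : μ₁*(4*μ₂*s) = 4*μ₁*μ₂*s := by ring
    rw [hr]; linarith
  have hprod : (μ₂ * s) * (ε/(4*μ₂*s)) = ε/4 := by
    field_simp
  clear hstab hfac h1 h2 hAc hBc hCc hDc hDelta hkey hA hB hC hD hE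
  refine ⟨hb1, hb2, hprod, ?_⟩
  rcases le_or_gt μ₁ 0 with hneg | hpos
  · have : 0 < Real.sqrt ε := Real.sqrt_pos.mpr hε
    linarith
  · have hsq : μ₁^2 < ε/4 := by
      have k1 : 0 < (μ₂*s - μ₁)*μ₁ := mul_pos (sub_pos.mpr hb1) hpos
      have hms : 0 < μ₂ * s := mul_pos hμ₂ hs0
      have k2 : 0 < (ε/(4*μ₂*s) - μ₁)*(μ₂*s) := mul_pos (sub_pos.mpr hb2) hms
      have e1 : (μ₂*s - μ₁)*μ₁ = (μ₂*s)*μ₁ - μ₁^2 := by ring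
      have e2 : (ε/(4*μ₂*s) - μ₁)*(μ₂*s) = ε/4 - (μ₂*s)*μ₁ := by linear_combination hprod
      rw [e1] at k1
      rw [e2] at k2
      linarith
    have h2μ : 2*μ₁ < Real.sqrt ε := by
      rw [show (2*μ₁ : ℝ) < Real.sqrt ε ↔ (2*μ₁)^2 < ε from Real.lt_sqrt (by linarith)]
      have : (2*μ₁)^2 = 4*μ₁^2 := by ring
      rw [this]; linarith
    linarith
end

section
/- Let ε > 0 and set μ₁ = √ε/2, γ = 1/√(1+ε), μ₂ = (1/2)√(ε/(1+ε)). Then the quartic z⁴ + 2((1+ε)γμ₂ − μ₁)z³ + ((1+ε)γ² − 4γμ₁μ₂ + 1)z² + 2γ(μ₂ − γμ₁)z + γ² equals (z² + 1)(z² + 1/(1+ε)); in particular its complex roots are exactly ±i and ±i/√(1+ε), two pairs of purely imaginary conjugate numbers. -/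
/-!
At point C the tuning satisfies `(1 + ε) γ² = 1`, `μ₂ = γ μ₁` and `4 μ₁² = ε`. The first two
make the odd coefficients `2((1+ε)γμ₂ - μ₁)` and `2γ(μ₂ - γμ₁)` vanish, and the third turns
the middle coefficient into `1 + γ²`, so the quartic is `(z² + 1)(z² + γ²)` with
`γ² = 1/(1+ε)`. Each factor `z² + w²` splits as `(z - iw)(z + iw)`.
-/

open Complex

theorem sq_add_sq_eq_zero_iff (z w : ℂ) : z ^ 2 + w ^ 2 = 0 ↔ z = I * w ∨ z = -(I * w) := by
  have hIw : (I * w) ^ 2 = -w ^ 2 := by rw [mul_pow, I_sq]; ring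
  rw [← sq_eq_sq_iff_eq_or_eq_neg, hIw, add_eq_zero_iff_eq_neg]

theorem quartic_eq_of_tuning (ε γ μ₁ μ₂ : ℝ) (hγ : (1 + ε) * γ ^ 2 = 1) (hμ₂ : μ₂ = γ * μ₁)
    (hμ₁ : 4 * μ₁ ^ 2 = ε) (z : ℂ) :
    z^4 + ((2*((1+ε)*γ*μ₂ - μ₁) : ℝ) : ℂ)*z^3
        + (((1+ε)*γ^2 - 4*γ*μ₁*μ₂ + 1 : ℝ) : ℂ)*z^2
        + ((2*γ*(μ₂ - γ*μ₁) : ℝ) : ℂ)*z + ((γ^2 : ℝ) : ℂ)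
      = (z^2 + 1) * (z^2 + ((γ^2 : ℝ) : ℂ)) := by
  subst hμ₂
  have hcubic : 2*((1+ε)*γ*(γ*μ₁) - μ₁) = 0 := by linear_combination 2 * μ₁ * hγ
  have hlinear : 2*γ*(γ*μ₁ - γ*μ₁) = 0 := by ring
  have hquadratic : (1+ε)*γ^2 - 4*γ*μ₁*(γ*μ₁) + 1 = 1 + γ^2 := by
    linear_combination (-γ ^ 2) * hμ₁
  rw [hcubic, hlinear, hquadratic]
  push_cast
  ring

theorem one_add_mul_one_div_sqrt_one_add_sq {ε : ℝ} (hε : -1 < ε) :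
    (1 + ε) * (1 / Real.sqrt (1 + ε)) ^ 2 = 1 := by
  rw [div_pow, one_pow, Real.sq_sqrt (by linarith)]
  exact mul_one_div_cancel (by linarith)

theorem half_sqrt_div_one_add_eq {ε : ℝ} (hε : 0 ≤ ε) :
    (1/2) * Real.sqrt (ε/(1+ε)) = 1 / Real.sqrt (1 + ε) * (Real.sqrt ε / 2) := by
  rw [Real.sqrt_div hε]
  ring

theorem four_mul_half_sqrt_sq {ε : ℝ} (hε : 0 ≤ ε) : 4 * (Real.sqrt ε / 2) ^ 2 = ε := by
  rw [div_pow, Real.sq_sqrt hε]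
  ring

theorem stmt_10 (ε : ℝ) (hε : 0 < ε)
    (μ₁ γ μ₂ : ℝ) (hμ₁ : μ₁ = Real.sqrt ε / 2)
    (hγ : γ = 1/Real.sqrt (1+ε)) (hμ₂ : μ₂ = (1/2) * Real.sqrt (ε/(1+ε))) :
    (∀ z : ℂ, z^4 + ((2*((1+ε)*γ*μ₂ - μ₁) : ℝ) : ℂ)*z^3
        + (((1+ε)*γ^2 - 4*γ*μ₁*μ₂ + 1 : ℝ) : ℂ)*z^2
        + ((2*γ*(μ₂ - γ*μ₁) : ℝ) : ℂ)*z + ((γ^2 : ℝ) : ℂ)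
        = (z^2 + 1) * (z^2 + ((1/(1+ε) : ℝ) : ℂ))) ∧
    (∀ z : ℂ, z^4 + ((2*((1+ε)*γ*μ₂ - μ₁) : ℝ) : ℂ)*z^3
        + (((1+ε)*γ^2 - 4*γ*μ₁*μ₂ + 1 : ℝ) : ℂ)*z^2
        + ((2*γ*(μ₂ - γ*μ₁) : ℝ) : ℂ)*z + ((γ^2 : ℝ) : ℂ) = 0 ↔
      z = Complex.I ∨ z = -Complex.I ∨
        z = Complex.I / (Real.sqrt (1+ε) : ℂ) ∨ z = -(Complex.I / (Real.sqrt (1+ε) : ℂ))) := by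
  have hγ_sq : (1 + ε) * γ ^ 2 = 1 := hγ ▸ one_add_mul_one_div_sqrt_one_add_sq (by linarith)
  have hμ₂_eq : μ₂ = γ * μ₁ := by rw [hμ₂, hγ, hμ₁, half_sqrt_div_one_add_eq hε.le]
  have hμ₁_sq : 4 * μ₁ ^ 2 = ε := hμ₁ ▸ four_mul_half_sqrt_sq hε.le
  have hγ_sq' : γ ^ 2 = 1 / (1 + ε) := by
    rw [eq_div_iff (by linarith), mul_comm, hγ_sq]
  have hfactor := fun z => (quartic_eq_of_tuning ε γ μ₁ μ₂ hγ_sq hμ₂_eq hμ₁_sq z).trans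
    (by rw [hγ_sq'])
  refine ⟨hfactor, fun z => ?_⟩
  have hγC : ((1 / (1 + ε) : ℝ) : ℂ) = ((1 / Real.sqrt (1 + ε) : ℝ) : ℂ) ^ 2 := by
    rw [← hγ, ← hγ_sq', ofReal_pow]
  rw [hfactor, mul_eq_zero, hγC, ← one_pow 2, sq_add_sq_eq_zero_iff, sq_add_sq_eq_zero_iff,
    mul_one, ofReal_div, ofReal_one, mul_one_div, or_assoc]
end
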